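/- Let Y be a free ℤ-module of finite rank and (α_i, α_i∨), i ∈ I a finite family of root/coroot pairs (α_i ∈ Hom_ℤ(Y,ℤ), α_i∨ ∈ Y, ⟨α_i, α_i∨⟩ = 2). Let Q : Y → ℤ be a quadratic form invariant under every reflection s_{α_i}. Fix a positive integer n and set Y_{Q,n} := {y ∈ Y : n | B_Q(y, z) for all z ∈ Y}, Y_{Q,n}^{sc} := ℤ-span of {(n / gcd(n, Q(α_i∨)))·α_i∨ : i ∈ I}, and J := n·Y + Y_{Q,n}^{sc}. If y ∈ Y_{Q,n} and k is an odd integer with k·y ∈ J, then n divides Q(y). -/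

import Mathlib

/-!
Since `B_Q(y, y) = 2·Q(y)`, we have `n ∣ 2·Q(y)`; as `k² - 1` is even for odd `k`, it suffices
to get `n ∣ Q(k·y) = k²·Q(y)`. This follows because `k·y ∈ J` and `J` lies in the submodule of
vectors `w` with `n ∣ B_Q(w, -)` and `n ∣ Q(w)`: that is clear for `n·Y`, and for a modified
coroot it follows from reflection invariance, which forces `B_Q(z, α∨) = ⟨α, z⟩·Q(α∨)`.
-/

theorem Odd.dvd_of_dvd_mul_self_mul {R : Type*} [CommRing R] {k d a : R} (hk : Odd k)
    (h2 : d ∣ 2 * a) (h : d ∣ k * k * a) : d ∣ a := by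
  obtain ⟨m, rfl⟩ := hk
  have hsplit : a = (2 * m + 1) * (2 * m + 1) * a - (2 * m * m + 2 * m) * (2 * a) := by ring
  rw [hsplit]
  exact dvd_sub h (h2.mul_left _)

theorem Int.natCast_dvd_div_gcd_mul (n : ℕ) (q : ℤ) :
    (n : ℤ) ∣ ((n / Int.gcd n q : ℕ) : ℤ) * q := by
  set g := Int.gcd n q
  obtain ⟨q', hq'⟩ : (g : ℤ) ∣ q := Int.gcd_dvd_right _ _
  have hn : ((n / g : ℕ) : ℤ) * g = n := by
    exact_mod_cast Nat.div_mul_cancel (Int.ofNat_dvd.mp (Int.gcd_dvd_left (n : ℤ) q))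
  exact ⟨q', by rw [hq', ← mul_assoc, hn]⟩

namespace QuadraticForm

variable {R M : Type*} [CommRing R] [AddCommGroup M] [Module R M] (Q : QuadraticForm R M)

def dvdSubmodule (d : R) : Submodule R M where
  carrier := {w | (∀ z, d ∣ QuadraticMap.polar Q w z) ∧ d ∣ Q w}
  add_mem' := by
    rintro a b ⟨ha, ha'⟩ ⟨hb, hb'⟩
    refine ⟨fun z => ?_, ?_⟩
    · rw [QuadraticMap.polar_add_left]
      exact dvd_add (ha z) (hb z)
    · rw [QuadraticMap.map_add Q]
      exact dvd_add (dvd_add ha' hb') (ha b)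
  zero_mem' := ⟨fun z => by simp [QuadraticMap.polar_zero_left], by simp⟩
  smul_mem' := by
    rintro c w ⟨hw, hw'⟩
    refine ⟨fun z => ?_, ?_⟩
    · rw [QuadraticMap.polar_smul_left, smul_eq_mul]
      exact (hw z).mul_left c
    · rw [QuadraticMap.map_smul, smul_eq_mul]
      exact hw'.mul_left _

variable {Q}

theorem mem_dvdSubmodule {d : R} {w : M} :
    w ∈ Q.dvdSubmodule d ↔ (∀ z, d ∣ QuadraticMap.polar Q w z) ∧ d ∣ Q w :=
  Iff.rfl

theorem smul_mem_dvdSubmodule (d : R) (z : M) : d • z ∈ Q.dvdSubmodule d := by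
  refine ⟨fun u => ?_, ?_⟩
  · rw [QuadraticMap.polar_smul_left, smul_eq_mul]
    exact dvd_mul_right _ _
  · rw [QuadraticMap.map_smul, smul_eq_mul, mul_assoc]
    exact dvd_mul_right _ _

section Reflection

variable {α : M →ₗ[R] R} {αv : M}

theorem mul_polar_eq_of_reflection_invariant (hW : ∀ y, Q (y - α y • αv) = Q y) (w : M) :
    α w * QuadraticMap.polar Q w αv = α w * (α w * Q αv) := by
  have h := hW w
  rw [sub_eq_add_neg, QuadraticMap.map_add Q, QuadraticMap.polar_neg_right,
    QuadraticMap.polar_smul_right, Q.map_neg, QuadraticMap.map_smul, smul_eq_mul,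
    smul_eq_mul] at h
  linear_combination -h

theorem polar_eq_mul_of_reflection_invariant [NoZeroDivisors R] [NeZero (2 : R)]
    (hpair : α αv = 2) (hW : ∀ y, Q (y - α y • αv) = Q y) (z : M) :
    QuadraticMap.polar Q z αv = α z * Q αv := by
  have hz := mul_polar_eq_of_reflection_invariant hW z
  have hz' := mul_polar_eq_of_reflection_invariant hW (z + αv)
  rw [map_add, hpair, QuadraticMap.polar_add_left, QuadraticMap.polar_self, two_nsmul] at hz'
  have h2 : 2 * (QuadraticMap.polar Q z αv - α z * Q αv) = 0 := by
    linear_combination hz' - hz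
  rw [mul_eq_zero, sub_eq_zero] at h2
  exact h2.resolve_left two_ne_zero

theorem smul_coroot_mem_dvdSubmodule [NoZeroDivisors R] [NeZero (2 : R)]
    (hpair : α αv = 2) (hW : ∀ y, Q (y - α y • αv) = Q y) {d m : R} (hm : d ∣ m * Q αv) :
    m • αv ∈ Q.dvdSubmodule d := by
  refine ⟨fun z => ?_, ?_⟩
  · rw [QuadraticMap.polar_smul_left, QuadraticMap.polar_comm,
      polar_eq_mul_of_reflection_invariant hpair hW, smul_eq_mul, mul_left_comm]
    exact hm.mul_left _
  · rw [QuadraticMap.map_smul, smul_eq_mul, mul_assoc]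
    exact hm.mul_left _

end Reflection

end QuadraticForm

open QuadraticForm in
theorem stmt_4_general (Y : Type*) [AddCommGroup Y] [Module ℤ Y]
    (Q : QuadraticForm ℤ Y) (I : Type*)
    (α : I → (Y →ₗ[ℤ] ℤ)) (αv : I → Y)
    (hpair : ∀ i, α i (αv i) = 2)
    (hW : ∀ (i : I) (y : Y), Q (y - α i y • αv i) = Q y)
    (n : ℕ) (y : Y)
    (hy : ∀ z : Y, (n : ℤ) ∣ QuadraticMap.polar (⇑Q) y z)
    (k : ℤ) (hk : Odd k)
    (hky : k • y ∈ (LinearMap.range ((n : ℤ) • (LinearMap.id : Y →ₗ[ℤ] Y)) ⊔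
        Submodule.span ℤ
          (Set.range fun i : I => ((n / Int.gcd (n : ℤ) (Q (αv i)) : ℕ) : ℤ) • αv i))) :
    (n : ℤ) ∣ Q y := by
  have hcoroot : ∀ i, ((n / Int.gcd (n : ℤ) (Q (αv i)) : ℕ) : ℤ) • αv i ∈ Q.dvdSubmodule n := by
    intro i
    -- `•` in the statement is the `zsmul` of `AddCommGroup Y`, not the action of `[Module ℤ Y]`
    rw [← Int.cast_smul_eq_zsmul ℤ, Int.cast_id]
    refine smul_coroot_mem_dvdSubmodule (hpair i) (fun z => ?_) (Int.natCast_dvd_div_gcd_mul _ _)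
    simpa only [← Int.cast_smul_eq_zsmul ℤ, Int.cast_id] using hW i z
  have hrange : LinearMap.range ((n : ℤ) • (LinearMap.id : Y →ₗ[ℤ] Y)) ≤ Q.dvdSubmodule n := by
    rintro _ ⟨z, rfl⟩
    rw [zsmul_eq_mul, Module.End.mul_apply, Module.End.intCast_apply, LinearMap.id_apply,
      ← Int.cast_smul_eq_zsmul ℤ, Int.cast_id]
    exact smul_mem_dvdSubmodule (n : ℤ) z
  have hJ := sup_le hrange (Submodule.span_le.mpr (Set.range_subset_iff.mpr hcoroot)) hky
  rw [← Int.cast_smul_eq_zsmul ℤ, Int.cast_id, mem_dvdSubmodule, QuadraticMap.map_smul,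
    smul_eq_mul] at hJ
  have h2 := hy y
  rw [QuadraticMap.polar_self, nsmul_eq_mul, Nat.cast_ofNat] at h2
  exact hk.dvd_of_dvd_mul_self_mul h2 hJ.2

/-- With `Q` a reflection-invariant `ℤ`-valued quadratic form on a lattice `Y`,
`Y_{Q,n} = {y : n ∣ B_Q(y, z) for all z}`, `Y_{Q,n}^{sc}` the span of the modified
coroots, and `J = n·Y + Y_{Q,n}^{sc}`: if `y ∈ Y_{Q,n}` and `k` is an odd integer
with `k • y ∈ J`, then `n ∣ Q(y)`. -/
theorem stmt_4 (Y : Type*) [AddCommGroup Y] [Module ℤ Y]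
    [Module.Free ℤ Y] [Module.Finite ℤ Y]
    (Q : QuadraticForm ℤ Y) (I : Type*) [Finite I]
    (α : I → (Y →ₗ[ℤ] ℤ)) (αv : I → Y)
    (hpair : ∀ i, α i (αv i) = 2)
    (hW : ∀ (i : I) (y : Y), Q (y - α i y • αv i) = Q y)
    (n : ℕ) (hn : 0 < n) (y : Y)
    (hy : ∀ z : Y, (n : ℤ) ∣ QuadraticMap.polar (⇑Q) y z)
    (k : ℤ) (hk : Odd k)
    (hky : k • y ∈ (LinearMap.range ((n : ℤ) • (LinearMap.id : Y →ₗ[ℤ] Y)) ⊔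
        Submodule.span ℤ
          (Set.range fun i : I => ((n / Int.gcd (n : ℤ) (Q (αv i)) : ℕ) : ℤ) • αv i))) :
    (n : ℤ) ∣ Q y :=
  stmt_4_general Y Q I α αv hpair hW n y hy k hk hky
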